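/- arXiv:2406.04274 — 2 statements merged into one kernel-verified Lean document; each statement's English description precedes it below -/
import Mathlib

section
/- Let Y be a finite set, μ a probability distribution on Y with μ(y) > 0 for all y, η > 0, and f_1,…,f_T: Y → ℝ. Define π_1 = μ and for t ≥ 1 let π_{t+1}(y) ∝ π_t(y)·exp(f_t(y)/η). Then for every t ∈ {1,…,T−1}: η·D_KL(π_t || π_{t+1}) ≤ ⟨π_{t+1} − π_t, f_t⟩ = Σ_{y∈Y} (π_{t+1}(y) − π_t(y))·f_t(y). -/
/-!
With `q = p · exp g / Z` (here `g = f_t / η`), we have `log (q / p) = g - log Z` pointwise. Adding the nonnegative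
divergence `D(q ‖ p)` to `D(p ‖ q)` gives the symmetrised divergence `∑ (q - p) log (q / p)`, and since
`p` and `q` have the same mass the constant `log Z` drops out, leaving `⟨q - p, g⟩`.
-/

open Finset Real

namespace Real

lemma sub_le_mul_log_div {p q : ℝ} (hp : 0 < p) (hq : 0 < q) : q - p ≤ q * log (q / p) := by
  have h := one_sub_inv_le_log_of_pos (div_pos hq hp)
  rw [inv_div] at h
  calc q - p = q * (1 - p / q) := by field_simp
    _ ≤ q * log (q / p) := mul_le_mul_of_nonneg_left h hq.le

lemma mul_log_div_add_mul_log_div (p q : ℝ) :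
    p * log (p / q) + q * log (q / p) = (q - p) * log (q / p) := by
  rw [← inv_div q p, log_inv]
  ring

end Real

section KLDivergence

variable {Y : Type*} [Fintype Y]

lemma sum_mul_log_div_nonneg {p q : Y → ℝ} (hp : ∀ y, 0 < p y) (hq : ∀ y, 0 < q y)
    (hpq : ∑ y, p y ≤ ∑ y, q y) : 0 ≤ ∑ y, q y * log (q y / p y) :=
  calc 0 ≤ ∑ y, (q y - p y) := by rw [sum_sub_distrib]; linarith
    _ ≤ ∑ y, q y * log (q y / p y) :=
      sum_le_sum fun y _ => sub_le_mul_log_div (hp y) (hq y)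

lemma sum_mul_log_div_le_sum_sub_mul_log_div {p q : Y → ℝ} (hp : ∀ y, 0 < p y)
    (hq : ∀ y, 0 < q y) (hpq : ∑ y, p y ≤ ∑ y, q y) :
    ∑ y, p y * log (p y / q y) ≤ ∑ y, (q y - p y) * log (q y / p y) := by
  simp only [← mul_log_div_add_mul_log_div, sum_add_distrib]
  linarith [sum_mul_log_div_nonneg hp hq hpq]

noncomputable def expTilt (p g : Y → ℝ) (y : Y) : ℝ :=
  p y * exp (g y) / ∑ y', p y' * exp (g y')

variable [Nonempty Y] {p : Y → ℝ} (hp : ∀ y, 0 < p y) (g : Y → ℝ)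
include hp

lemma sum_mul_exp_pos : 0 < ∑ y, p y * exp (g y) :=
  sum_pos (fun y _ => mul_pos (hp y) (exp_pos _)) univ_nonempty

lemma expTilt_pos (y : Y) : 0 < expTilt p g y :=
  div_pos (mul_pos (hp y) (exp_pos _)) (sum_mul_exp_pos hp g)

lemma sum_expTilt : ∑ y, expTilt p g y = 1 := by
  simp only [expTilt]
  rw [← sum_div, div_self (sum_mul_exp_pos hp g).ne']

lemma log_expTilt_div (y : Y) :
    log (expTilt p g y / p y) = g y - log (∑ y', p y' * exp (g y')) := by
  have hratio : expTilt p g y / p y = exp (g y) / ∑ y', p y' * exp (g y') := by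
    rw [expTilt, div_right_comm, mul_div_cancel_left₀ _ (hp y).ne']
  rw [hratio, log_div (exp_pos _).ne' (sum_mul_exp_pos hp g).ne', log_exp]

lemma sum_mul_log_div_expTilt_le (hp1 : ∑ y, p y = 1) :
    ∑ y, p y * log (p y / expTilt p g y) ≤ ∑ y, (expTilt p g y - p y) * g y := by
  set c := log (∑ y', p y' * exp (g y'))
  have hmass : ∑ y, (expTilt p g y - p y) = 0 := by
    rw [sum_sub_distrib, sum_expTilt hp, hp1, sub_self]
  calc ∑ y, p y * log (p y / expTilt p g y)
      ≤ ∑ y, (expTilt p g y - p y) * log (expTilt p g y / p y) :=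
        sum_mul_log_div_le_sum_sub_mul_log_div hp (expTilt_pos hp g)
          (by rw [hp1, sum_expTilt hp])
    _ = ∑ y, (expTilt p g y - p y) * g y - ∑ y, (expTilt p g y - p y) * c := by
        rw [← sum_sub_distrib]
        exact sum_congr rfl fun y _ => by rw [log_expTilt_div hp, mul_sub]
    _ = ∑ y, (expTilt p g y - p y) * g y := by rw [← sum_mul, hmass, zero_mul, sub_zero]

end KLDivergence

/-- (Bregman-divergence step) With `π_1 = μ` fully supported and
`π_{t+1}(y) ∝ π_t(y)·exp(f_t(y)/η)` for all `t ≥ 1`, for every `t ∈ {1,…,T−1}`: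
`η·D_KL(π_t ‖ π_{t+1}) ≤ ⟨π_{t+1} − π_t, f_t⟩`. -/
theorem bregman_step_bound {Y : Type*} [Fintype Y]
    (μ : Y → ℝ) (hμ0 : ∀ y, 0 < μ y) (hμ1 : ∑ y, μ y = 1)
    (η : ℝ) (hη : 0 < η) (T : ℕ)
    (f : ℕ → Y → ℝ)
    (πs : ℕ → Y → ℝ)
    (hinit : πs 1 = μ)
    (hrec : ∀ t, 1 ≤ t → ∀ y,
      πs (t + 1) y = πs t y * Real.exp (f t y / η)
        / ∑ y', πs t y' * Real.exp (f t y' / η)) :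
    ∀ t, 1 ≤ t → t ≤ T - 1 →
      η * ∑ y, πs t y * Real.log (πs t y / πs (t + 1) y)
        ≤ ∑ y, (πs (t + 1) y - πs t y) * f t y := by
  have : Nonempty Y := by
    by_contra h
    simp [not_nonempty_iff.mp h] at hμ1
  have hstep : ∀ t, 1 ≤ t → πs (t + 1) = expTilt (πs t) (fun y => f t y / η) :=
    fun t ht => funext (hrec t ht)
  have hprob : ∀ t, 1 ≤ t → (∀ y, 0 < πs t y) ∧ ∑ y, πs t y = 1 := by
    intro t ht
    induction t, ht using Nat.le_induction with
    | base => exact hinit ▸ ⟨hμ0, hμ1⟩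
    | succ t ht ih =>
      rw [hstep t ht]
      exact ⟨expTilt_pos ih.1 _, sum_expTilt ih.1 _⟩
  intro t ht _
  obtain ⟨hpos, hsum⟩ := hprob t ht
  have key := sum_mul_log_div_expTilt_le hpos (fun y => f t y / η) hsum
  rw [← hstep t ht] at key
  calc η * ∑ y, πs t y * log (πs t y / πs (t + 1) y)
      ≤ η * ∑ y, (πs (t + 1) y - πs t y) * (f t y / η) := mul_le_mul_of_nonneg_left key hη.le
    _ = ∑ y, (πs (t + 1) y - πs t y) * f t y := by
        rw [mul_sum]
        exact sum_congr rfl fun y _ => by field_simp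
end

section
/- Let Y be a finite set, μ a probability distribution on Y with μ(y) > 0 for all y, η > 0, and f_1,…,f_T: Y → ℝ with ||f_t||_∞ ≤ R for all t. Define π_1 = μ and for t ≥ 1 let π_{t+1}(y) ∝ π_t(y)·exp(f_t(y)/η). Then for every t: ⟨π_{t+1} − π_t, f_t⟩ = Σ_{y∈Y} (π_{t+1}(y) − π_t(y))·f_t(y) ≤ 2R²/η. -/
/-!
Write `p = π_t`, `w = exp (f_t / η)` and `Z = ∑ p w`, so that `π_{t+1} = p w / Z`. Then
`⟨π_{t+1} - π_t, f_t⟩ = Cov_p (f_t, w) / Z`, and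
`2 Cov_p (f_t, w) = ∑_{y, y'} p y p y' (f_t y - f_t y') (w y - w y')`.
Since the trapezoid rule overestimates integrals of the convex function `exp`, each factor
`(f_t y - f_t y') (w y - w y')` is at most `(f_t y - f_t y')² / (2η) (w y + w y') ≤ 2R²/η (w y + w y')`,
and summing these bounds against `p y p y'` gives exactly `2R²/η · 2Z`.
-/

open Finset

namespace Real

theorem monotone_mul_exp_add_one_sub_two_mul_exp_sub_one :
    Monotone fun x : ℝ => x * (exp x + 1) - 2 * (exp x - 1) := by
  have hderiv : ∀ x : ℝ,
      HasDerivAt (fun x => x * (exp x + 1) - 2 * (exp x - 1)) (exp x * (exp (-x) - 1 + x)) x := by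
    intro x
    refine (((hasDerivAt_id' x).mul ((hasDerivAt_exp x).add_const 1)).sub
      (((hasDerivAt_exp x).sub_const 1).const_mul 2)).congr_deriv ?_
    rw [exp_neg]
    field_simp
    ring
  refine monotone_of_deriv_nonneg (fun x => (hderiv x).differentiableAt) fun x => ?_
  rw [(hderiv x).deriv]
  have := add_one_le_exp (-x)
  exact mul_nonneg (exp_pos x).le (by linarith)

theorem sub_mul_exp_sub_exp_le (a b : ℝ) :
    (a - b) * (exp a - exp b) ≤ (a - b) ^ 2 * (exp a + exp b) / 2 := by
  set h := fun x : ℝ => x * (exp x + 1) - 2 * (exp x - 1)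
  have hmono := monotone_mul_exp_add_one_sub_two_mul_exp_sub_one
  have hsign : 0 ≤ (a - b) * h (a - b) := by
    rcases le_total 0 (a - b) with hx | hx
    · exact mul_nonneg hx (by simpa [h] using hmono hx)
    · exact mul_nonneg_of_nonpos_of_nonpos hx (by simpa [h] using hmono hx)
  have hsplit : exp a = exp b * exp (a - b) := by rw [← exp_add]; ring_nf
  rw [hsplit]
  nlinarith [mul_nonneg hsign (exp_pos b).le]

theorem sub_mul_exp_div_sub_exp_div_le {η : ℝ} (hη : 0 < η) (u v : ℝ) :
    (u - v) * (exp (u / η) - exp (v / η))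
      ≤ (u - v) ^ 2 / (2 * η) * (exp (u / η) + exp (v / η)) :=
  calc (u - v) * (exp (u / η) - exp (v / η))
      = η * ((u / η - v / η) * (exp (u / η) - exp (v / η))) := by field_simp
    _ ≤ η * ((u / η - v / η) ^ 2 * (exp (u / η) + exp (v / η)) / 2) :=
      mul_le_mul_of_nonneg_left (sub_mul_exp_sub_exp_le _ _) hη.le
    _ = (u - v) ^ 2 / (2 * η) * (exp (u / η) + exp (v / η)) := by field_simp

theorem sub_mul_exp_div_sub_exp_div_le_of_abs_le {η R u v : ℝ} (hη : 0 < η)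
    (hu : |u| ≤ R) (hv : |v| ≤ R) :
    (u - v) * (exp (u / η) - exp (v / η)) ≤ 2 * R ^ 2 / η * (exp (u / η) + exp (v / η)) := by
  have hdiff : (u - v) ^ 2 ≤ (2 * R) ^ 2 := by
    have := abs_le.mp hu
    have := abs_le.mp hv
    exact sq_le_sq' (by linarith) (by linarith)
  calc (u - v) * (exp (u / η) - exp (v / η))
      ≤ (u - v) ^ 2 / (2 * η) * (exp (u / η) + exp (v / η)) :=
        sub_mul_exp_div_sub_exp_div_le hη u v
    _ ≤ (2 * R) ^ 2 / (2 * η) * (exp (u / η) + exp (v / η)) := by gcongr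
    _ = 2 * R ^ 2 / η * (exp (u / η) + exp (v / η)) := by field_simp

end Real

section Tilt

variable {Y : Type*} [Fintype Y]

theorem sum_sum_mul_mul_sub_mul_sub (p f w : Y → ℝ) (hp : ∑ y, p y = 1) :
    ∑ y, ∑ y', p y * p y' * ((f y - f y') * (w y - w y'))
      = 2 * (∑ y, p y * f y * w y - (∑ y, p y * w y) * ∑ y, p y * f y) := by
  have hexpand : ∀ y y', p y * p y' * ((f y - f y') * (w y - w y'))
      = p y * f y * w y * p y' + p y * (p y' * f y' * w y')
        - (p y * w y * (p y' * f y') + p y * f y * (p y' * w y')) := fun _ _ => by ring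
  simp only [hexpand, sum_sub_distrib, sum_add_distrib, ← sum_mul, ← mul_sum, hp]
  ring

theorem sum_mul_mul_sub_sum_mul_mul_sum_le {p f w : Y → ℝ} (c : ℝ)
    (hp0 : ∀ y, 0 ≤ p y) (hp : ∑ y, p y = 1)
    (hfw : ∀ y y', (f y - f y') * (w y - w y') ≤ c * (w y + w y')) :
    ∑ y, p y * f y * w y - (∑ y, p y * w y) * ∑ y, p y * f y ≤ c * ∑ y, p y * w y := by
  have hle : ∑ y, ∑ y', p y * p y' * ((f y - f y') * (w y - w y'))
      ≤ ∑ y, ∑ y', p y * p y' * (c * (w y + w y')) :=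
    sum_le_sum fun y _ => sum_le_sum fun y' _ =>
      mul_le_mul_of_nonneg_left (hfw y y') (mul_nonneg (hp0 y) (hp0 y'))
  have hexpand : ∀ y y', p y * p y' * (c * (w y + w y'))
      = c * (p y * w y * p y' + p y * (p y' * w y')) := fun _ _ => by ring
  simp only [hexpand, ← mul_sum, sum_add_distrib, ← sum_mul, hp,
    sum_sum_mul_mul_sub_mul_sub p f w hp] at hle
  linarith

noncomputable def tilt (p w : Y → ℝ) : Y → ℝ := fun y => p y * w y / ∑ y', p y' * w y'

theorem sum_mul_pos [Nonempty Y] {p w : Y → ℝ} (hp : ∀ y, 0 < p y) (hw : ∀ y, 0 < w y) :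
    0 < ∑ y, p y * w y :=
  sum_pos (fun y _ => mul_pos (hp y) (hw y)) univ_nonempty

theorem tilt_pos [Nonempty Y] {p w : Y → ℝ} (hp : ∀ y, 0 < p y) (hw : ∀ y, 0 < w y) (y : Y) :
    0 < tilt p w y :=
  div_pos (mul_pos (hp y) (hw y)) (sum_mul_pos hp hw)

theorem sum_tilt {p w : Y → ℝ} (hZ : ∑ y, p y * w y ≠ 0) : ∑ y, tilt p w y = 1 := by
  simp only [tilt]
  rw [← sum_div, div_self hZ]

theorem sum_tilt_sub_mul_le {p f w : Y → ℝ} (c : ℝ)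
    (hp0 : ∀ y, 0 ≤ p y) (hp : ∑ y, p y = 1) (hZ : 0 < ∑ y, p y * w y)
    (hfw : ∀ y y', (f y - f y') * (w y - w y') ≤ c * (w y + w y')) :
    ∑ y, (tilt p w y - p y) * f y ≤ c := by
  have hcov := sum_mul_mul_sub_sum_mul_mul_sum_le c hp0 hp hfw
  have hrw : ∑ y, (tilt p w y - p y) * f y
      = (∑ y, p y * f y * w y - (∑ y, p y * w y) * ∑ y, p y * f y) / ∑ y, p y * w y := by
    simp only [tilt, sub_mul, sum_sub_distrib, div_mul_eq_mul_div, ← sum_div]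
    field_simp
    simp only [mul_right_comm (p _) (w _) (f _)]
  rw [hrw, div_le_iff₀ hZ]
  exact hcov

end Tilt

theorem one_step_regret_bound_general {Y : Type*} [Fintype Y]
    (μ : Y → ℝ) (hμ0 : ∀ y, 0 < μ y) (hμ1 : ∑ y, μ y = 1)
    (η : ℝ) (hη : 0 < η)
    (f : ℕ → Y → ℝ) (R : ℝ) (hR : ∀ t y, |f t y| ≤ R)
    (πs : ℕ → Y → ℝ)
    (hinit : πs 1 = μ)
    (hrec : ∀ t, 1 ≤ t → ∀ y,
      πs (t + 1) y = πs t y * Real.exp (f t y / η)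
        / ∑ y', πs t y' * Real.exp (f t y' / η)) :
    ∀ t, 1 ≤ t →
      ∑ y, (πs (t + 1) y - πs t y) * f t y ≤ 2 * R ^ 2 / η := by
  have : Nonempty Y := by
    by_contra hY
    simp [not_nonempty_iff.mp hY] at hμ1
  have hexp : ∀ t y, 0 < Real.exp (f t y / η) := fun _ _ => Real.exp_pos _
  have hstep : ∀ t, 1 ≤ t → πs (t + 1) = tilt (πs t) fun y => Real.exp (f t y / η) :=
    fun t ht => funext (hrec t ht)
  have hprob : ∀ t, 1 ≤ t → (∀ y, 0 < πs t y) ∧ ∑ y, πs t y = 1 := by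
    intro t ht
    induction t, ht using Nat.le_induction with
    | base => exact hinit ▸ ⟨hμ0, hμ1⟩
    | succ t ht ih =>
      rw [hstep t ht]
      exact ⟨tilt_pos ih.1 (hexp t), sum_tilt (sum_mul_pos ih.1 (hexp t)).ne'⟩
  intro t ht
  obtain ⟨hpos, hsum⟩ := hprob t ht
  rw [hstep t ht]
  exact sum_tilt_sub_mul_le _ (fun y => (hpos y).le) hsum (sum_mul_pos hpos (hexp t))
    fun y y' => Real.sub_mul_exp_div_sub_exp_div_le_of_abs_le hη (hR t y) (hR t y')

/-- (One-step regret bound) With `π_1 = μ` fully supported,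
`‖f_t‖_∞ ≤ R` for all `t`, and `π_{t+1}(y) ∝ π_t(y)·exp(f_t(y)/η)` for all
`t ≥ 1`, each step satisfies `⟨π_{t+1} − π_t, f_t⟩ ≤ 2R²/η`. -/
theorem one_step_regret_bound {Y : Type*} [Fintype Y]
    (μ : Y → ℝ) (hμ0 : ∀ y, 0 < μ y) (hμ1 : ∑ y, μ y = 1)
    (η : ℝ) (hη : 0 < η) (T : ℕ)
    (f : ℕ → Y → ℝ) (R : ℝ) (hR : ∀ t y, |f t y| ≤ R)
    (πs : ℕ → Y → ℝ)
    (hinit : πs 1 = μ)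
    (hrec : ∀ t, 1 ≤ t → ∀ y,
      πs (t + 1) y = πs t y * Real.exp (f t y / η)
        / ∑ y', πs t y' * Real.exp (f t y' / η)) :
    ∀ t, 1 ≤ t →
      ∑ y, (πs (t + 1) y - πs t y) * f t y ≤ 2 * R ^ 2 / η :=
  one_step_regret_bound_general μ hμ0 hμ1 η hη f R hR πs hinit hrec
end
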